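/- Let K be a finite collection of (d+1)-element subsets (facets) of a vertex set V such that every labelling λ of V by {1,…,d+1} satisfying certain boundary conditions has a rainbow facet distinct from a fixed facet σ whenever σ itself is rainbow; and let K' be obtained from K by replacing a facet π ≠ σ by a triangulation L of π whose boundary agrees with ∂π and in which every labelling injective on the d+1 boundary vertex classes of L has a rainbow facet (Sperner's lemma for L). Then every such labelling of K' has a rainbow facet distinct from σ. -/
import Mathlib


/-- A facet is rainbow under a labelling when the labelling is injective on it. -/
def Rainbow {V : Type*} {m : ℕ} (l : V → Fin m) (σ : Finset V) : Prop :=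
  Set.InjOn l ↑σ

/-- The subdivision step in the proof of Theorem 1.4. Here `K` is a collection
of `(d+1)`-element facets on a vertex set `V`, `B` is an abstract boundary
condition on labellings, and `σ ∈ K` a fixed facet such that every labelling
satisfying `B` which makes `σ` rainbow has a rainbow facet of `K` distinct from
`σ`; moreover every labelling satisfying `B` has some rainbow facet of `K`
(Sperner's lemma for `K`). If `K'` is obtained from `K` by replacing a facet
`π ≠ σ` by a triangulation `L` of `π` (not containing `σ`) satisfying Sperner's
lemma — every labelling injective on the boundary vertices `π` of `L` has a
rainbow facet in `L` — then every labelling of `K'` satisfying `B` has a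
rainbow facet of `K'` distinct from `σ`. -/
theorem subdivision_preserves_noncriticality {V : Type*} [DecidableEq V] {d : ℕ}
    (K L : Finset (Finset V)) (B : (V → Fin (d + 1)) → Prop)
    (hKcard : ∀ τ ∈ K, τ.card = d + 1) (hLcard : ∀ τ ∈ L, τ.card = d + 1)
    (σ π : Finset V) (hσK : σ ∈ K) (hπK : π ∈ K) (hπσ : π ≠ σ) (hσL : σ ∉ L)
    (hK : ∀ lam : V → Fin (d + 1), B lam → Rainbow lam σ →
      ∃ τ ∈ K, τ ≠ σ ∧ Rainbow lam τ)
    (hKsperner : ∀ lam : V → Fin (d + 1), B lam → ∃ τ ∈ K, Rainbow lam τ)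
    (hLsperner : ∀ lam : V → Fin (d + 1), B lam → Set.InjOn lam ↑π →
      ∃ τ ∈ L, Rainbow lam τ) :
    ∀ lam : V → Fin (d + 1), B lam →
      ∃ τ ∈ (K.erase π) ∪ L, τ ≠ σ ∧ Rainbow lam τ := by
  intro lam hB
  have key : ∀ τ ∈ K, τ ≠ σ → Rainbow lam τ →
      ∃ τ' ∈ (K.erase π) ∪ L, τ' ≠ σ ∧ Rainbow lam τ' := by
    intro τ hτK hτσ hτr
    by_cases hτπ : τ = π
    · subst hτπ
      obtain ⟨τ', hτ'L, hτ'r⟩ := hLsperner lam hB hτr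
      exact ⟨τ', Finset.mem_union_right _ hτ'L,
        fun h => hσL (h ▸ hτ'L), hτ'r⟩
    · exact ⟨τ, Finset.mem_union_left _ (Finset.mem_erase.mpr ⟨hτπ, hτK⟩),
        hτσ, hτr⟩
  by_cases hσr : Rainbow lam σ
  · obtain ⟨τ, hτK, hτσ, hτr⟩ := hK lam hB hσr
    exact key τ hτK hτσ hτr
  · obtain ⟨τ, hτK, hτr⟩ := hKsperner lam hB
    exact key τ hτK (fun h => hσr (h ▸ hτr)) hτr
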